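/- arXiv:1102.3240 — 3 statements merged into one kernel-verified Lean document; each statement's English description precedes it below -/
import Mathlib

section
/- Let R be a discrete valuation domain with prime element p, let λ be a limit ordinal, and let N be a submodule of a torsion R-module G. Then N is λ-balanced in G (i.e., p^σG ∩ N = p^σN and p^σ(G/N) = (p^σG + N)/N for every σ < λ) if and only if (p^σG[p] + N)/N = (p^σ(G/N))[p] for every σ < λ. -/
universe u v w

open Ordinal

/-- The submodule `p^σ G`, defined by transfinite recursion. -/
noncomputable def pPow (R : Type u) [CommRing R] (p : R) (G : Type v) [AddCommGroup G]
    [Module R G] (σ : Ordinal.{w}) : Submodule R G :=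
  Ordinal.limitRecOn σ ⊤ (fun _ N => N.map (LinearMap.lsmul R G p))
    (fun o _ ih => ⨅ ρ : Set.Iio o, ih ρ.1 ρ.2)

/-!
Isotypy at `σ + 1` and niceness at `σ` lift the socle of `p^σ(G/N)`: write `z = x + N` with
`x ∈ p^σG`; then `px ∈ p^{σ+1}G ∩ N = p(p^σN)`, say `px = pn`, and `x - n ∈ p^σG[p]` lifts `z`.
Conversely, if the socles lift, then `p^σG ∩ N = p^σN` passes from `σ` to `σ + 1` (and through
limits, where both sides are intersections), and an element of `p^σ(G/N)` killed by `p^k` lifts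
to `p^σG` by induction on `k`, using the socle condition at `σ + 1 < λ`. As `G` is torsion over a
DVR, `G/N` is `p`-primary, so this is niceness.
-/

open Submodule

lemma IsDiscreteValuationRing.exists_pow_smul_eq_zero {R : Type u} [CommRing R] [IsDomain R]
    [IsDiscreteValuationRing R] {p : R} (hp : Irreducible p) {M : Type v} [AddCommGroup M]
    [Module R M] (hM : Module.IsTorsion R M) (x : M) : ∃ k : ℕ, p ^ k • x = 0 := by
  obtain ⟨⟨r, hr⟩, hrx : r • x = 0⟩ := @hM x
  obtain ⟨k, v, hkv⟩ := associated_pow_irreducible (nonZeroDivisors.ne_zero hr) hp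
  exact ⟨k, by rw [← hkv, mul_comm, mul_smul, hrx, smul_zero]⟩

section pPow

variable (R : Type u) [CommRing R] (p : R) (G : Type v) [AddCommGroup G] [Module R G]

@[simp] lemma pPow_zero : pPow R p G 0 = ⊤ :=
  limitRecOn_zero _ _ _

lemma pPow_add_one (σ : Ordinal.{w}) :
    pPow R p G (σ + 1) = (pPow R p G σ).map (LinearMap.lsmul R G p) :=
  limitRecOn_add_one _ _ _ _

lemma pPow_limit {o : Ordinal.{w}} (ho : Order.IsSuccLimit o) :
    pPow R p G o = ⨅ ρ : Set.Iio o, pPow R p G ρ.1 :=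
  limitRecOn_limit _ _ _ _ ho

variable {R p G}

lemma mem_pPow_add_one_iff {σ : Ordinal.{w}} {x : G} :
    x ∈ pPow R p G (σ + 1) ↔ ∃ y ∈ pPow R p G σ, p • y = x := by
  simp [pPow_add_one]

lemma smul_mem_pPow_add_one {σ : Ordinal.{w}} {x : G} (hx : x ∈ pPow R p G σ) :
    p • x ∈ pPow R p G (σ + 1) :=
  mem_pPow_add_one_iff.2 ⟨x, hx, rfl⟩

variable (p) {H : Type*} [AddCommGroup H] [Module R H]

lemma map_pPow_le (f : G →ₗ[R] H) (σ : Ordinal.{w}) :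
    (pPow R p G σ).map f ≤ pPow R p H σ := by
  induction σ using limitRecOn with
  | zero => simp
  | add_one σ ih =>
    rintro _ ⟨x, hx, rfl⟩
    obtain ⟨y, hy, rfl⟩ := mem_pPow_add_one_iff.1 hx
    rw [map_smul]
    exact smul_mem_pPow_add_one (ih ⟨y, hy, rfl⟩)
  | limit o ho ih =>
    rw [pPow_limit _ _ _ ho, pPow_limit _ _ _ ho]
    exact le_iInf fun ρ => (map_mono (iInf_le _ ρ)).trans (ih ρ.1 ρ.2)

lemma le_comap_subtype_pPow (N : Submodule R G) (σ : Ordinal.{w}) :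
    pPow R p N σ ≤ (pPow R p G σ).comap N.subtype :=
  map_le_iff_le_comap.1 (map_pPow_le p N.subtype σ)

lemma map_mkQ_pPow_inf_torsionBy_le (N : Submodule R G) (σ : Ordinal.{w}) :
    (pPow R p G σ ⊓ torsionBy R G p).map N.mkQ ≤ pPow R p (G ⧸ N) σ ⊓ torsionBy R (G ⧸ N) p := by
  rintro _ ⟨x, ⟨hx, hpx⟩, rfl⟩
  refine ⟨map_pPow_le p N.mkQ σ ⟨x, hx, rfl⟩, ?_⟩
  rw [SetLike.mem_coe, mem_torsionBy_iff] at hpx ⊢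
  rw [← map_smul, hpx, map_zero]

end pPow

section balanced

variable {R : Type u} [CommRing R] {p : R} {G : Type v} [AddCommGroup G] [Module R G]
  {N : Submodule R G}

lemma map_mkQ_sup_self (A : Submodule R G) : (A ⊔ N).map N.mkQ = A.map N.mkQ := by
  rw [Submodule.map_sup, mkQ_map_self, sup_bot_eq]

lemma pPow_inf_eq_map_subtype_iff {σ : Ordinal.{w}} :
    pPow R p G σ ⊓ N = (pPow R p N σ).map N.subtype ↔
      (pPow R p G σ).comap N.subtype = pPow R p N σ := by
  rw [inf_comm, ← map_comap_subtype]
  exact (map_injective_of_injective N.injective_subtype).eq_iff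

lemma mkQ_mem_torsionBy_iff {x : G} : N.mkQ x ∈ torsionBy R (G ⧸ N) p ↔ p • x ∈ N := by
  rw [mem_torsionBy_iff, ← map_smul, mkQ_apply, Quotient.mk_eq_zero]

theorem map_mkQ_pPow_inf_torsionBy_eq {σ : Ordinal.{w}}
    (hiso : (pPow R p G (σ + 1)).comap N.subtype = pPow R p N (σ + 1))
    (hnice : pPow R p (G ⧸ N) σ = (pPow R p G σ).map N.mkQ) :
    (pPow R p G σ ⊓ torsionBy R G p).map N.mkQ =
      pPow R p (G ⧸ N) σ ⊓ torsionBy R (G ⧸ N) p := by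
  refine le_antisymm (map_mkQ_pPow_inf_torsionBy_le p N σ) ?_
  rintro _ ⟨hz, hpz⟩
  rw [hnice] at hz
  obtain ⟨x, hx, rfl⟩ := hz
  have hpx : (⟨p • x, mkQ_mem_torsionBy_iff.1 hpz⟩ : N) ∈ pPow R p N (σ + 1) := by
    rw [← hiso]
    exact smul_mem_pPow_add_one hx
  obtain ⟨n, hn, hnx⟩ := mem_pPow_add_one_iff.1 hpx
  refine ⟨x - n, ⟨sub_mem hx (le_comap_subtype_pPow p N σ hn), ?_⟩, ?_⟩
  · rw [SetLike.mem_coe, mem_torsionBy_iff, smul_sub, sub_eq_zero]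
    exact (congrArg Subtype.val hnx).symm
  · simp

end balanced

section socle

variable {R : Type u} [CommRing R] {p : R} {G : Type v} [AddCommGroup G] [Module R G]
  {N : Submodule R G} {lam : Ordinal.{w}}
  (hsoc : ∀ σ < lam, pPow R p (G ⧸ N) σ ⊓ torsionBy R (G ⧸ N) p ≤
    (pPow R p G σ ⊓ torsionBy R G p).map N.mkQ)
include hsoc

lemma comap_subtype_pPow_eq_of_socle_le (σ : Ordinal.{w}) (hσ : σ < lam) :
    (pPow R p G σ).comap N.subtype = pPow R p N σ := by
  induction σ using limitRecOn with
  | zero => simp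
  | add_one σ ih =>
    refine le_antisymm (fun n hn => ?_) (le_comap_subtype_pPow p N _)
    obtain ⟨x, hx, hxn⟩ := mem_pPow_add_one_iff.1 hn
    have hxN : N.mkQ x ∈ pPow R p (G ⧸ N) σ ⊓ torsionBy R (G ⧸ N) p :=
      ⟨map_pPow_le p N.mkQ σ ⟨x, hx, rfl⟩, mkQ_mem_torsionBy_iff.2 (hxn ▸ n.2)⟩
    have hσ' : σ < lam := (lt_add_one σ).trans hσ
    obtain ⟨u, ⟨hu, hpu⟩, hux⟩ := hsoc σ hσ' hxN
    have hxu : x - u ∈ N := by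
      rw [← Quotient.mk_eq_zero, ← mkQ_apply, map_sub, hux, _root_.sub_self]
    have hxu' : (⟨x - u, hxu⟩ : N) ∈ pPow R p N σ := by
      rw [← ih hσ']
      exact sub_mem hx hu
    refine mem_pPow_add_one_iff.2 ⟨_, hxu', Subtype.ext ?_⟩
    rw [SetLike.mem_coe, mem_torsionBy_iff] at hpu
    simp [smul_sub, hpu, hxn]
  | limit o ho ih =>
    rw [pPow_limit _ _ _ ho, pPow_limit _ _ _ ho, comap_iInf]
    exact iInf_congr fun ρ => ih ρ.1 ρ.2 (ρ.2.trans hσ)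

lemma mem_map_mkQ_pPow_of_pow_smul_eq_zero (hlam : Order.IsSuccLimit lam) (k : ℕ) :
    ∀ σ < lam, ∀ z ∈ pPow R p (G ⧸ N) σ, p ^ k • z = 0 → z ∈ (pPow R p G σ).map N.mkQ := by
  induction k with
  | zero =>
    intro σ _ z _ hz
    rw [pow_zero, one_smul] at hz
    exact hz ▸ zero_mem _
  | succ k ih =>
    intro σ hσ z hz hkz
    obtain ⟨_, hy, hyz⟩ := ih (σ + 1) (hlam.add_one_lt hσ) (p • z) (smul_mem_pPow_add_one hz)
      (by rwa [← mul_smul, ← pow_succ])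
    obtain ⟨x, hx, rfl⟩ := mem_pPow_add_one_iff.1 hy
    have hzx : z - N.mkQ x ∈ pPow R p (G ⧸ N) σ ⊓ torsionBy R (G ⧸ N) p := by
      refine ⟨sub_mem hz (map_pPow_le p N.mkQ σ ⟨x, hx, rfl⟩), (mem_torsionBy_iff _ _).2 ?_⟩
      rw [smul_sub, ← map_smul, hyz, _root_.sub_self]
    obtain ⟨u, ⟨hu, -⟩, hux⟩ := hsoc σ hσ hzx
    exact ⟨x + u, add_mem hx hu, by rw [map_add, hux, _root_.add_sub_cancel]⟩

lemma pPow_quotient_eq_map_mkQ_of_socle_le (hlam : Order.IsSuccLimit lam)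
    (htors : ∀ x : G, ∃ k : ℕ, p ^ k • x = 0) (σ : Ordinal.{w}) (hσ : σ < lam) :
    pPow R p (G ⧸ N) σ = (pPow R p G σ).map N.mkQ := by
  refine le_antisymm (fun z hz => ?_) (map_pPow_le p N.mkQ σ)
  obtain ⟨x, rfl⟩ := N.mkQ_surjective z
  obtain ⟨k, hk⟩ := htors x
  exact mem_map_mkQ_pPow_of_pow_smul_eq_zero hsoc hlam k σ hσ _ hz
    (by rw [← map_smul, hk, map_zero])

end socle

theorem stmt2 (R : Type u) [CommRing R] [IsDomain R] [IsDiscreteValuationRing R]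
    (p : R) (hp : Irreducible p)
    (lam : Ordinal.{w}) (hlam : Order.IsSuccLimit lam)
    (G : Type v) [AddCommGroup G] [Module R G] (hG : Module.IsTorsion R G)
    (N : Submodule R G) :
    ((∀ σ < lam, pPow R p G σ ⊓ N = (pPow R p (↥N) σ).map N.subtype) ∧
      (∀ σ < lam, pPow R p (G ⧸ N) σ = (pPow R p G σ ⊔ N).map N.mkQ)) ↔
      ∀ σ < lam,
        ((pPow R p G σ ⊓ Submodule.torsionBy R G p) ⊔ N).map N.mkQ =
          pPow R p (G ⧸ N) σ ⊓ Submodule.torsionBy R (G ⧸ N) p := by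
  simp only [pPow_inf_eq_map_subtype_iff, map_mkQ_sup_self]
  constructor
  · rintro ⟨hiso, hnice⟩ σ hσ
    exact map_mkQ_pPow_inf_torsionBy_eq (hiso _ (hlam.add_one_lt hσ)) (hnice σ hσ)
  · intro hsoc
    replace hsoc := fun σ hσ => (hsoc σ hσ).ge
    exact ⟨comap_subtype_pPow_eq_of_socle_le hsoc, pPow_quotient_eq_map_mkQ_of_socle_le hsoc hlam
      (IsDiscreteValuationRing.exists_pow_smul_eq_zero hp hG)⟩
end

section
/- Let R be a discrete valuation domain with prime element p, β an ordinal, and P_β the Walker module. Then the quotient of P_β by the cyclic submodule ⟨β⟩ generated by the generator β is isomorphic to the direct sum ⊕_{γ<β} P_γ of the Walker modules P_γ over all ordinals γ < β. -/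
universe u v w

open Ordinal

/-- Generators of the Walker module `P β`: strictly decreasing finite sequences of ordinals
starting with `β` (encoded by their tails). -/
def WalkerGen (β : Ordinal.{w}) : Type (w + 1) :=
  {l : List Ordinal.{w} // (β :: l).Chain' (· > ·)}

/-- The defining relation of the Walker module attached to a generator `g`:
`p • g - g'` where `g'` is obtained by deleting the last entry of `g`
(interpreted as `0` when `g` is the length-one sequence `β`). -/
noncomputable def walkerRel (R : Type u) [CommRing R] (p : R) (β : Ordinal.{w})
    (g : WalkerGen β) : WalkerGen β →₀ R :=
  p • Finsupp.single g 1 -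
    if _h : g.1 = [] then 0
    else Finsupp.single
      ⟨g.1.dropLast, g.2.sublist ((g.1.dropLast_sublist).cons₂ β)⟩ 1

/-- The Walker module `P β` over a discrete valuation domain with prime `p`. -/
noncomputable abbrev WalkerModule (R : Type u) [CommRing R] (p : R) (β : Ordinal.{w}) :=
  (WalkerGen β →₀ R) ⧸ Submodule.span R (Set.range (walkerRel R p β))

/-- The image in `P β` of a generator. -/
noncomputable def walkerMk (R : Type u) [CommRing R] (p : R) (β : Ordinal.{w})
    (g : WalkerGen β) : WalkerModule R p β :=
  Submodule.Quotient.mk (Finsupp.single g 1)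

/-- The distinguished generator `β` of the Walker module `P β`. -/
noncomputable def walkerTop (R : Type u) [CommRing R] (p : R) (β : Ordinal.{w}) :
    WalkerModule R p β :=
  walkerMk R p β ⟨[], List.isChain_singleton β⟩


/-!
A generator of `P β` other than `β` itself is `γ s` with `γ < β` and `s` a generator of `P γ`,
and the relations of `P β` among these are those of `P γ` on the tails `s`, except that
`p • γ = β`, which becomes `p • γ = 0` modulo `⟨β⟩`. Hence `γ s ↦ s ∈ P γ`, `β ↦ 0`, and
`s ∈ P γ ↦ γ s` respect the presentations and are mutually inverse.
-/

open scoped DirectSum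

namespace WalkerGen

variable {β : Ordinal.{w}}

def nil (β : Ordinal.{w}) : WalkerGen β :=
  ⟨[], List.isChain_singleton β⟩

def cons (γ : Set.Iio β) (m : WalkerGen γ.1) : WalkerGen β :=
  ⟨γ.1 :: m.1, List.isChain_cons_cons.mpr ⟨γ.2, m.2⟩⟩

def dropLast (g : WalkerGen β) : WalkerGen β :=
  ⟨g.1.dropLast, g.2.sublist (g.1.dropLast_sublist.cons_cons β)⟩

theorem eq_nil_or_exists_eq_cons (g : WalkerGen β) :
    g = nil β ∨ ∃ γ m, g = cons γ m := by
  obtain ⟨_ | ⟨γ, t⟩, h⟩ := g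
  · exact Or.inl rfl
  · exact Or.inr ⟨⟨γ, (List.isChain_cons_cons.mp h).1⟩, ⟨t, (List.isChain_cons_cons.mp h).2⟩, rfl⟩

@[simp]
theorem dropLast_cons_nil (γ : Set.Iio β) : (cons γ (nil γ.1)).dropLast = nil β :=
  rfl

theorem dropLast_cons_cons (γ : Set.Iio β) (δ : Set.Iio γ.1) (m : WalkerGen δ.1) :
    (cons γ (cons δ m)).dropLast = cons γ (cons δ m).dropLast :=
  Subtype.ext (List.dropLast_cons_of_ne_nil (List.cons_ne_nil _ _))

end WalkerGen

section UniversalProperty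

variable {R : Type u} [CommRing R] {p : R} {β : Ordinal.{w}}
  {M : Type v} [AddCommGroup M] [Module R M]

theorem walkerRel_nil :
    walkerRel R p β (WalkerGen.nil β) = p • Finsupp.single (WalkerGen.nil β) 1 :=
  sub_zero _

theorem walkerRel_cons (γ : Set.Iio β) (m : WalkerGen γ.1) :
    walkerRel R p β (WalkerGen.cons γ m) =
      p • Finsupp.single (WalkerGen.cons γ m) 1 - Finsupp.single (WalkerGen.cons γ m).dropLast 1 :=
  rfl

@[simp]
theorem walkerMk_nil : walkerMk R p β (WalkerGen.nil β) = walkerTop R p β :=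
  rfl

theorem walkerMk_walkerRel (g : WalkerGen β) :
    (Submodule.Quotient.mk (walkerRel R p β g) : WalkerModule R p β) = 0 :=
  (Submodule.Quotient.mk_eq_zero _).2 (Submodule.subset_span ⟨g, rfl⟩)

@[simp]
theorem smul_walkerTop : p • walkerTop R p β = 0 := by
  have hrel := walkerMk_walkerRel (R := R) (p := p) (WalkerGen.nil β)
  rwa [walkerRel_nil, Submodule.Quotient.mk_smul] at hrel

theorem smul_walkerMk_cons (γ : Set.Iio β) (m : WalkerGen γ.1) :
    p • walkerMk R p β (WalkerGen.cons γ m) = walkerMk R p β (WalkerGen.cons γ m).dropLast := by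
  have hrel := walkerMk_walkerRel (R := R) (p := p) (WalkerGen.cons γ m)
  rwa [walkerRel_cons, Submodule.Quotient.mk_sub, Submodule.Quotient.mk_smul, sub_eq_zero] at hrel

noncomputable def walkerLift (f : WalkerGen β → M) (hnil : p • f (WalkerGen.nil β) = 0)
    (hcons : ∀ γ m, p • f (WalkerGen.cons γ m) = f (WalkerGen.cons γ m).dropLast) :
    WalkerModule R p β →ₗ[R] M :=
  Submodule.liftQ _ (Finsupp.linearCombination R f) <| by
    rw [Submodule.span_le]
    rintro _ ⟨g, rfl⟩
    obtain rfl | ⟨γ, m, rfl⟩ := g.eq_nil_or_exists_eq_cons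
    · simpa [walkerRel_nil] using hnil
    · simpa [walkerRel_cons, sub_eq_zero] using hcons γ m

@[simp]
theorem walkerLift_walkerMk (f : WalkerGen β → M) (hnil : p • f (WalkerGen.nil β) = 0)
    (hcons : ∀ γ m, p • f (WalkerGen.cons γ m) = f (WalkerGen.cons γ m).dropLast)
    (g : WalkerGen β) :
    walkerLift f hnil hcons (walkerMk R p β g) = f g := by
  simp [walkerLift, walkerMk]

theorem WalkerModule.hom_ext {f f' : WalkerModule R p β →ₗ[R] M}
    (h : ∀ g, f (walkerMk R p β g) = f' (walkerMk R p β g)) : f = f' :=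
  Submodule.linearMap_qext _ <| Finsupp.lhom_ext' fun g => LinearMap.ext_ring (h g)

end UniversalProperty

section QuotientByTop

variable (R : Type u) [CommRing R] (p : R) (β : Ordinal.{w})

/-- Instance search builds `⨁` on the `AddCommMonoid` structure of a quotient module and then
fails to see it as the one underlying its `AddCommGroup` structure. -/
noncomputable instance : AddCommGroup (⨁ γ : Set.Iio β, WalkerModule R p γ.1) :=
  @DirectSum.instAddCommGroup _ (fun γ : Set.Iio β => WalkerModule R p γ.1) fun _ => inferInstance

/-- `γ β₂ … βₙ ↦ β₂ … βₙ` in the summand `P γ`, and `β ↦ 0`. -/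
noncomputable def walkerHead : WalkerGen β → ⨁ γ : Set.Iio β, WalkerModule R p γ.1
  | ⟨[], _⟩ => 0
  | ⟨γ :: t, h⟩ =>
    DirectSum.lof R _ (fun γ : Set.Iio β => WalkerModule R p γ.1)
      ⟨γ, (List.isChain_cons_cons.mp h).1⟩ (walkerMk R p γ ⟨t, (List.isChain_cons_cons.mp h).2⟩)

variable {R p β}

@[simp]
theorem walkerHead_nil : walkerHead R p β (WalkerGen.nil β) = 0 :=
  rfl

@[simp]
theorem walkerHead_cons (γ : Set.Iio β) (m : WalkerGen γ.1) :
    walkerHead R p β (WalkerGen.cons γ m) = DirectSum.lof R _ _ γ (walkerMk R p γ.1 m) :=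
  rfl

theorem smul_walkerHead_nil : p • walkerHead R p β (WalkerGen.nil β) = 0 :=
  smul_zero (A := ⨁ γ : Set.Iio β, WalkerModule R p γ.1) p

theorem smul_walkerHead_cons (γ : Set.Iio β) (m : WalkerGen γ.1) :
    p • walkerHead R p β (WalkerGen.cons γ m) = walkerHead R p β (WalkerGen.cons γ m).dropLast := by
  rw [walkerHead_cons, ← map_smul]
  obtain rfl | ⟨δ, m, rfl⟩ := m.eq_nil_or_exists_eq_cons
  · simp
  · rw [smul_walkerMk_cons, WalkerGen.dropLast_cons_cons, walkerHead_cons]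

@[simp]
theorem mk_walkerTop :
    (Submodule.Quotient.mk (walkerTop R p β) :
      WalkerModule R p β ⧸ Submodule.span R {walkerTop R p β}) = 0 :=
  (Submodule.Quotient.mk_eq_zero _).2 (Submodule.mem_span_singleton_self _)

variable (R p β)

noncomputable def walkerQuotTopToSum :
    (WalkerModule R p β ⧸ Submodule.span R {walkerTop R p β}) →ₗ[R]
      ⨁ γ : Set.Iio β, WalkerModule R p γ.1 :=
  Submodule.liftQ _ (walkerLift (walkerHead R p β) smul_walkerHead_nil smul_walkerHead_cons) <| by
    rw [Submodule.span_le, Set.singleton_subset_iff, SetLike.mem_coe, LinearMap.mem_ker]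
    exact walkerLift_walkerMk (R := R) (p := p) _ _ _ (WalkerGen.nil β)

noncomputable def walkerSumToQuotTop :
    (⨁ γ : Set.Iio β, WalkerModule R p γ.1) →ₗ[R]
      WalkerModule R p β ⧸ Submodule.span R {walkerTop R p β} :=
  DirectSum.toModule R _ _ fun γ =>
    walkerLift (fun m => Submodule.Quotient.mk (walkerMk R p β (WalkerGen.cons γ m)))
      (by simp [← Submodule.Quotient.mk_smul, smul_walkerMk_cons])
      fun δ m => by
        rw [← Submodule.Quotient.mk_smul, smul_walkerMk_cons, WalkerGen.dropLast_cons_cons]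

theorem walkerQuotTopToSum_comp_walkerSumToQuotTop :
    walkerQuotTopToSum R p β ∘ₗ walkerSumToQuotTop R p β = LinearMap.id := by
  refine DirectSum.linearMap_ext _ fun γ => WalkerModule.hom_ext fun m => ?_
  simp [walkerQuotTopToSum, walkerSumToQuotTop]

theorem walkerSumToQuotTop_comp_walkerQuotTopToSum :
    walkerSumToQuotTop R p β ∘ₗ walkerQuotTopToSum R p β = LinearMap.id := by
  refine Submodule.linearMap_qext _ <| WalkerModule.hom_ext fun g => ?_
  obtain rfl | ⟨γ, m, rfl⟩ := g.eq_nil_or_exists_eq_cons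
  · simp [walkerQuotTopToSum]
  · simp [walkerQuotTopToSum, walkerSumToQuotTop]

end QuotientByTop

open DirectSum in
theorem stmt4_general (R : Type u) [CommRing R]
    (p : R) (β : Ordinal.{w}) :
    Nonempty
      ((WalkerModule R p β ⧸ Submodule.span R {walkerTop R p β}) ≃ₗ[R]
        ⨁ γ : Set.Iio β, WalkerModule R p γ.1) :=
  ⟨LinearEquiv.ofLinearMap _ _ (walkerQuotTopToSum_comp_walkerSumToQuotTop R p β)
    (walkerSumToQuotTop_comp_walkerQuotTopToSum R p β)⟩

open DirectSum in
theorem stmt4 (R : Type u) [CommRing R] [IsDomain R] [IsDiscreteValuationRing R]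
    (p : R) (hp : Irreducible p) (β : Ordinal.{w}) :
    Nonempty
      ((WalkerModule R p β ⧸ Submodule.span R {walkerTop R p β}) ≃ₗ[R]
        ⨁ γ : Set.Iio β, WalkerModule R p γ.1) :=
  stmt4_general R p β
end

section
/- Let λ be an infinite regular cardinal, let A be a λ-accessible category, and let B be a λ-accessible subcategory of A given by a set S' of objects of B that are λ-presentable in A. Then for an object Y of A the following are equivalent: (1) Y belongs to B; (2) for every λ-presentable object X of A, every morphism X → Y factors through an object of S'. Consequently, B is closed under λ-directed colimits in A and is itself a λ-accessible category. -/
/-! The substance is (2) ⇒ (1). Present `Y` as a `κ`-directed colimit of `κ`-presentable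
objects `D j`; by (2) every colimit injection `D j ⟶ Y` factors through some `F i`. Since a
`κ`-small diagram of `κ`-presentable objects over `Y` lifts to a single stage `D j`, the
canonical diagram of `Y` with respect to the `F i` (the comma category `F ↓ Y`) is `κ`-filtered
and has colimit `Y`. A `κ`-filtered category receives a final functor from a `κ`-directed poset
(Deligne), which exhibits `Y` as a `κ`-directed colimit of objects `F i`. Closure of `B` under
`κ`-directed colimits is then immediate from (2), and the `F i` remain `κ`-presentable in `B`
because the inclusion of `B` preserves `κ`-directed colimits. -/

universe w v u

open CategoryTheory CategoryTheory.Limits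

/-- A preordered set is `κ`-directed if every subset of cardinality `< κ` has an upper bound. -/
def IsCardDirected (κ : Cardinal.{w}) (J : Type w) [Preorder J] : Prop :=
  ∀ s : Set J, Cardinal.mk s < κ → ∃ u : J, ∀ j ∈ s, j ≤ u

/-- An object `X` is `κ`-presentable if `Hom(X, -)` preserves colimits of `κ`-directed
systems. -/
def IsPresentableObj {A : Type u} [Category.{v} A] (κ : Cardinal.{v}) (X : A) : Prop :=
  ∀ (J : Type v) [Preorder J], IsCardDirected κ J →
    PreservesColimitsOfShape J (coyoneda.obj (Opposite.op X))

/-- `Y` is a colimit of a `κ`-directed system of objects belonging to `S`. -/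
def IsDirColimitOf {A : Type u} [Category.{v} A] (κ : Cardinal.{v}) (S : Set A) (Y : A) :
    Prop :=
  ∃ (J : Type v) (_ : Preorder J) (_ : IsCardDirected κ J) (D : J ⥤ A) (c : Cocone D),
    (∀ j : J, D.obj j ∈ S) ∧ Nonempty (IsColimit c) ∧ Nonempty (c.pt ≅ Y)

/-- A category is `κ`-accessible: it has `κ`-directed colimits and there is a set of
`κ`-presentable objects such that every object is a `κ`-directed colimit of objects
from this set. -/
def IsAccessibleCat (κ : Cardinal.{v}) (A : Type u) [Category.{v} A] : Prop :=
  (∀ (J : Type v) [Preorder J], IsCardDirected κ J → HasColimitsOfShape J A) ∧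
  ∃ (ι : Type v) (F : ι → A),
    (∀ i, IsPresentableObj κ (F i)) ∧ ∀ Y : A, IsDirColimitOf κ (Set.range F) Y


open Opposite

section CardinalDirected

variable {κ : Cardinal.{w}} [Fact κ.IsRegular] {J : Type w} [Preorder J]

theorem IsCardDirected.isCardinalFiltered (hJ : IsCardDirected κ J) : IsCardinalFiltered J κ :=
  isCardinalFiltered_preorder J κ fun _ s hs =>
    (hJ (Set.range s) (Cardinal.mk_range_le.trans_lt hs)).imp fun _ hj k => hj _ ⟨k, rfl⟩

theorem isCardDirected_of_isCardinalFiltered [IsCardinalFiltered J κ] : IsCardDirected κ J :=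
  fun s hs =>
    have hs' : HasCardinalLT s κ := (hasCardinalLT_iff_cardinal_mk_lt _ _).2 hs
    ⟨IsCardinalFiltered.max Subtype.val hs',
      fun j hj => leOfHom (IsCardinalFiltered.toMax Subtype.val hs' ⟨j, hj⟩)⟩

end CardinalDirected

section Lifting

variable {A : Type u} [Category.{v} A] {κ : Cardinal.{w}} [Fact κ.IsRegular]
  {J : Type*} [Category J] [IsCardinalFiltered J κ] {D : J ⥤ A} {c : Cocone D}

theorem exists_natTrans_factor_of_isColimit (hc : IsColimit c) {I : Type*} [Category I]
    (hI : HasCardinalLT (Arrow I) κ) {K : I ⥤ A}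
    [∀ i, PreservesColimit D (coyoneda.obj (op (K.obj i)))]
    (s : K ⟶ (Functor.const I).obj c.pt) :
    ∃ (j : J) (t : K ⟶ (Functor.const I).obj (D.obj j)),
      t ≫ (Functor.const I).map (c.ι.app j) = s := by
  have := isFiltered_of_isCardinalFiltered J κ
  choose j₀ p hp using fun i => exists_hom_of_preservesColimit_coyoneda hc (s.app i)
  let m := IsCardinalFiltered.max j₀ (hasCardinalLT_of_hasCardinalLT_arrow hI)
  let q (i : I) : K.obj i ⟶ D.obj m := p i ≫ D.map (IsCardinalFiltered.toMax j₀ _ i)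
  have hq (i : I) : q i ≫ c.ι.app m = s.app i := by simp [q, hp]
  choose l u hu using fun f : Arrow I =>
    exists_eq_of_preservesColimit_coyoneda_self hc (K.map f.hom ≫ q f.right) (q f.left)
      (by simp [hq])
  obtain ⟨n, a, b, hab⟩ := IsCardinalFiltered.wideSpan u hI
  refine ⟨n, { app i := q i ≫ D.map b, naturality i i' f := ?_ }, ?_⟩
  · simpa [← hab (Arrow.mk f)] using hu (Arrow.mk f) =≫ D.map (a (Arrow.mk f))
  · ext i
    simp [hq]

end Lifting

section CanonicalDiagram

variable {A : Type u} [Category.{v} A] {J : Type*} [Category J] {D : J ⥤ A} {c : Cocone D}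
  {C : Type*} [Category C] {Φ : C ⥤ A}

theorem exists_natTrans_factor_through_of_isColimit {κ : Cardinal.{w}} [Fact κ.IsRegular]
    [IsCardinalFiltered J κ] (hc : IsColimit c)
    (hfac : ∀ j, ∃ (x : C) (g : D.obj j ⟶ Φ.obj x) (h : Φ.obj x ⟶ c.pt), g ≫ h = c.ι.app j)
    {I : Type*} [Category I] (hI : HasCardinalLT (Arrow I) κ) {K : I ⥤ A}
    [∀ i, PreservesColimit D (coyoneda.obj (op (K.obj i)))]
    (s : K ⟶ (Functor.const I).obj c.pt) :
    ∃ (x : C) (h : Φ.obj x ⟶ c.pt) (t : K ⟶ (Functor.const I).obj (Φ.obj x)),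
      t ≫ (Functor.const I).map h = s := by
  obtain ⟨j, t, rfl⟩ := exists_natTrans_factor_of_isColimit hc hI s
  obtain ⟨x, g, h, hgh⟩ := hfac j
  exact ⟨x, h, t ≫ (Functor.const I).map g, by rw [Category.assoc, ← Functor.map_comp, hgh]⟩

theorem comp_ι_app_eq_ι_app [Φ.Full] (s : Cocone (CostructuredArrow.proj Φ c.pt ⋙ Φ))
    {f f' : CostructuredArrow Φ c.pt} (τ : Φ.obj f.left ⟶ Φ.obj f'.left)
    (hτ : τ ≫ f'.hom = f.hom) :
    τ ≫ s.ι.app f' = s.ι.app f := by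
  rw [← Φ.map_preimage τ]
  exact s.w (CostructuredArrow.homMk (Φ.preimage τ) (by rw [Φ.map_preimage]; exact hτ))

variable [∀ x, PreservesColimit D (coyoneda.obj (op (Φ.obj x)))]

theorem comp_eq_comp_of_isColimit (κ : Cardinal.{w}) [Fact κ.IsRegular]
    [IsCardinalFiltered J κ] (hc : IsColimit c)
    (hfac : ∀ j, ∃ (x : C) (g : D.obj j ⟶ Φ.obj x) (h : Φ.obj x ⟶ c.pt), g ≫ h = c.ι.app j)
    {T : A} (φ : ∀ f : CostructuredArrow Φ c.pt, Φ.obj f.left ⟶ T)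
    (hφ : ∀ {f f' : CostructuredArrow Φ c.pt} (τ : Φ.obj f.left ⟶ Φ.obj f'.left),
      τ ≫ f'.hom = f.hom → τ ≫ φ f' = φ f)
    {Q : A} [PreservesColimit D (coyoneda.obj (op Q))] {f₁ f₂ : CostructuredArrow Φ c.pt}
    (a₁ : Q ⟶ Φ.obj f₁.left) (a₂ : Q ⟶ Φ.obj f₂.left) (ha : a₁ ≫ f₁.hom = a₂ ≫ f₂.hom) :
    a₁ ≫ φ f₁ = a₂ ≫ φ f₂ := by
  have : ∀ i : WalkingSpan, PreservesColimit D (coyoneda.obj (op ((span a₁ a₂).obj i))) := by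
    rintro (_ | _ | _) <;> dsimp <;> infer_instance
  -- The square `a₁ ≫ f₁.hom = a₂ ≫ f₂.hom` is a cocone on a span of presentables over `c.pt`;
  -- it factors through a single object `mk h` of the canonical diagram.
  obtain ⟨x, h, t, ht⟩ := exists_natTrans_factor_through_of_isColimit hc hfac
    (hasCardinalLT_of_finite _ κ (Fact.out : κ.IsRegular).aleph0_le)
    (PushoutCocone.mk f₁.hom f₂.hom ha).ι
  let τ₁ : Φ.obj f₁.left ⟶ Φ.obj (CostructuredArrow.mk h).left := t.app .left
  let τ₂ : Φ.obj f₂.left ⟶ Φ.obj (CostructuredArrow.mk h).left := t.app .right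
  have hτ : a₁ ≫ τ₁ = a₂ ≫ τ₂ :=
    (t.naturality WalkingSpan.Hom.fst).trans (t.naturality WalkingSpan.Hom.snd).symm
  rw [← hφ τ₁ (congr_app ht .left), ← hφ τ₂ (congr_app ht .right), reassoc_of% hτ]

theorem exists_comp_eq_of_isColimit (κ : Cardinal.{w}) [Fact κ.IsRegular]
    [IsCardinalFiltered J κ] [∀ j, PreservesColimit D (coyoneda.obj (op (D.obj j)))]
    (hc : IsColimit c)
    (hfac : ∀ j, ∃ (x : C) (g : D.obj j ⟶ Φ.obj x) (h : Φ.obj x ⟶ c.pt), g ≫ h = c.ι.app j)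
    {T : A} (φ : ∀ f : CostructuredArrow Φ c.pt, Φ.obj f.left ⟶ T)
    (hφ : ∀ {f f' : CostructuredArrow Φ c.pt} (τ : Φ.obj f.left ⟶ Φ.obj f'.left),
      τ ≫ f'.hom = f.hom → τ ≫ φ f' = φ f) :
    ∃ d : c.pt ⟶ T, ∀ f, f.hom ≫ d = φ f := by
  -- On the stage `D j`, `d` goes through a chosen factorization of `c.ι.app j`;
  -- `comp_eq_comp_of_isColimit` makes this independent of the choice.
  choose x g h hgh using fun j => hfac j
  refine ⟨hc.desc
    { pt := T
      ι :=
        { app j := g j ≫ φ (CostructuredArrow.mk (h j))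
          naturality j j' u := by
            dsimp
            rw [Category.comp_id, ← Category.assoc]
            refine comp_eq_comp_of_isColimit κ hc hfac φ hφ (f₁ := CostructuredArrow.mk (h j'))
              (f₂ := CostructuredArrow.mk (h j)) (D.map u ≫ g j') (g j) ?_
            exact (Category.assoc _ _ _).trans
              ((D.map u ≫= hgh j').trans ((c.w u).trans (hgh j).symm)) } }, fun f => ?_⟩
  obtain ⟨j, p, hp⟩ := exists_hom_of_preservesColimit_coyoneda hc f.hom
  rw [← hp, Category.assoc, hc.fac, ← Category.assoc]
  simpa using comp_eq_comp_of_isColimit κ hc hfac φ hφ (f₁ := CostructuredArrow.mk (h j))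
    (p ≫ g j) (𝟙 _) (by simp [hgh, hp])

variable [Φ.Full]

theorem isCardinalFiltered_costructuredArrow_of_isColimit [Φ.Faithful] {κ : Cardinal.{w}}
    [Fact κ.IsRegular] [IsCardinalFiltered J κ] (hc : IsColimit c)
    (hfac : ∀ j, ∃ (x : C) (g : D.obj j ⟶ Φ.obj x) (h : Φ.obj x ⟶ c.pt), g ≫ h = c.ι.app j) :
    IsCardinalFiltered (CostructuredArrow Φ c.pt) κ where
  nonempty_cocone {I _} K hI := by
    have (i : I) : PreservesColimit D
        (coyoneda.obj (op ((K ⋙ CostructuredArrow.proj Φ c.pt ⋙ Φ).obj i))) :=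
      inferInstanceAs (PreservesColimit D (coyoneda.obj (op (Φ.obj (K.obj i).left))))
    obtain ⟨x, h, t, ht⟩ := exists_natTrans_factor_through_of_isColimit hc hfac hI
      (K := K ⋙ CostructuredArrow.proj Φ c.pt ⋙ Φ)
      { app i := (K.obj i).hom
        naturality _ _ f := (CostructuredArrow.w (K.map f)).trans (Category.comp_id _).symm }
    let τ (i : I) : Φ.obj (K.obj i).left ⟶ Φ.obj x := t.app i
    have hτ (i : I) : τ i ≫ h = (K.obj i).hom := congr_app ht i
    have hτ_nat {i i' : I} (f : i ⟶ i') : Φ.map (K.map f).left ≫ τ i' = τ i :=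
      (t.naturality f).trans (Category.comp_id _)
    exact ⟨{
      pt := CostructuredArrow.mk h
      ι :=
        { app i := CostructuredArrow.homMk (Φ.preimage (τ i)) (by simp [hτ])
          naturality _ _ f := by
            ext
            apply Φ.map_injective
            simp [hτ_nat] } }⟩

theorem isDenseAt_of_isColimit (κ : Cardinal.{w}) [Fact κ.IsRegular] [IsCardinalFiltered J κ]
    [∀ j, PreservesColimit D (coyoneda.obj (op (D.obj j)))] (hc : IsColimit c)
    (hfac : ∀ j, ∃ (x : C) (g : D.obj j ⟶ Φ.obj x) (h : Φ.obj x ⟶ c.pt), g ≫ h = c.ι.app j) :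
    Φ.isDenseAt c.pt := by
  have hι (f : CostructuredArrow Φ c.pt) :
      ((Functor.LeftExtension.mk (𝟭 A) Φ.rightUnitor.inv).coconeAt c.pt).ι.app f = f.hom :=
    Category.id_comp _
  refine ⟨IsColimit.ofExistsUnique fun s => ?_⟩
  obtain ⟨d, hd⟩ :=
    exists_comp_eq_of_isColimit κ hc hfac (fun f => s.ι.app f) (comp_ι_app_eq_ι_app s)
  refine ⟨d, fun f => (hι f =≫ d).trans (hd f),
    fun (d' : c.pt ⟶ s.pt) hd' => hc.hom_ext fun j => ?_⟩
  obtain ⟨x, g, h, hgh⟩ := hfac j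
  have e : h ≫ d' = h ≫ d :=
    (hι (CostructuredArrow.mk h) =≫ d').symm.trans ((hd' _).trans (hd _).symm)
  rw [← hgh, Category.assoc, Category.assoc, e]

end CanonicalDiagram

section Accessible

variable {A : Type u} [Category.{v} A] {κ : Cardinal.{v}}

theorem isDirColimitOf_of_isDenseAt [Fact κ.IsRegular] {C : Type v} [SmallCategory C]
    {Φ : C ⥤ A} {Y : A} [IsCardinalFiltered (CostructuredArrow Φ Y) κ] (hY : Φ.isDenseAt Y) :
    IsDirColimitOf κ (Set.range Φ.obj) Y := by
  obtain ⟨α, _, _, G, _⟩ := IsCardinalFiltered.exists_cardinal_directed (CostructuredArrow Φ Y) κ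
  exact ⟨α, inferInstance, isCardDirected_of_isCardinalFiltered,
    G ⋙ CostructuredArrow.proj Φ Y ⋙ Φ, _, fun a => ⟨_, rfl⟩,
    ⟨(Functor.Final.isColimitWhiskerEquiv G _).symm hY.some⟩, ⟨Iso.refl _⟩⟩

theorem IsDirColimitOf.exists_factorization {ι : Type*} {F : ι → A} {Y : A}
    (hY : IsDirColimitOf κ (Set.range F) Y) {X : A} (hX : IsPresentableObj κ X) (f : X ⟶ Y) :
    ∃ (i : ι) (g : X ⟶ F i) (h : F i ⟶ Y), g ≫ h = f := by
  obtain ⟨J, _, hJ, D, c, hD, ⟨hc⟩, ⟨e⟩⟩ := hY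
  have := hX J hJ
  obtain ⟨j, g, hg⟩ := exists_hom_of_preservesColimit_coyoneda (hc.extendIso e.hom) f
  obtain ⟨i, hi⟩ := hD j
  exact ⟨i, g ≫ eqToHom hi.symm, eqToHom hi ≫ c.ι.app j ≫ e.hom, by simpa using hg⟩

theorem isDirColimitOf_of_forall_factorization (hκ : κ.IsRegular) (hA : IsAccessibleCat κ A)
    {ι : Type v} {F : ι → A} (hF : ∀ i, IsPresentableObj κ (F i)) {Y : A}
    (hY : ∀ X : A, IsPresentableObj κ X → ∀ f : X ⟶ Y,
      ∃ (i : ι) (g : X ⟶ F i) (h : F i ⟶ Y), g ≫ h = f) :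
    IsDirColimitOf κ (Set.range F) Y := by
  have : Fact κ.IsRegular := ⟨hκ⟩
  obtain ⟨-, ιG, G, hG, hGen⟩ := hA
  obtain ⟨J, _, hJ, D, c, hD, ⟨hc⟩, ⟨e⟩⟩ := hGen Y
  have := hJ.isCardinalFiltered
  have hDpres (j : J) : IsPresentableObj κ (D.obj j) := by
    obtain ⟨k, hk⟩ := hD j
    exact hk ▸ hG k
  have (j : J) : PreservesColimit D (coyoneda.obj (op (D.obj j))) :=
    have := hDpres j J hJ; inferInstance
  have (i : ι) : PreservesColimit D (coyoneda.obj (op ((inducedFunctor F).obj i))) :=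
    have := hF i J hJ; inferInstanceAs (PreservesColimit D (coyoneda.obj (op (F i))))
  have hc' := hc.extendIso e.hom
  have hfac (j : J) := hY (D.obj j) (hDpres j) ((c.extend e.hom).ι.app j)
  have : IsCardinalFiltered (CostructuredArrow (inducedFunctor F) Y) κ :=
    isCardinalFiltered_costructuredArrow_of_isColimit hc' hfac
  have hdense : (inducedFunctor F).isDenseAt Y := isDenseAt_of_isColimit κ hc' hfac
  exact isDirColimitOf_of_isDenseAt hdense

end Accessible

section FullSubcategory

variable {A : Type u} [Category.{v} A] {κ : Cardinal.{v}} {P : ObjectProperty A}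

theorem IsDirColimitOf.mono {S T : Set A} (hST : S ⊆ T) {Y : A} (hY : IsDirColimitOf κ S Y) :
    IsDirColimitOf κ T Y :=
  let ⟨J, _, hJ, D, c, hD, hc, he⟩ := hY
  ⟨J, _, hJ, D, c, fun j => hST (hD j), hc, he⟩

theorem IsDirColimitOf.fullSubcategory {S : Set A} (hS : ∀ X ∈ S, P X) {Y : P.FullSubcategory}
    (hY : IsDirColimitOf κ S Y.obj) : IsDirColimitOf κ (P.ι.obj ⁻¹' S) Y := by
  obtain ⟨J, _, hJ, D, c, hD, ⟨hc⟩, ⟨e⟩⟩ := hY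
  refine ⟨J, inferInstance, hJ, P.lift D fun j => hS _ (hD j),
    { pt := Y
      ι :=
        { app j := ObjectProperty.homMk (c.ι.app j ≫ e.hom)
          naturality j j' u := by ext; simp } },
    hD, ⟨isColimitOfReflects P.ι (hc.extendIso e.hom)⟩, ⟨Iso.refl _⟩⟩

theorem IsPresentableObj.fullSubcategory
    (hP : ∀ (J : Type v) [Preorder J], IsCardDirected κ J → PreservesColimitsOfShape J P.ι)
    {X : P.FullSubcategory} (hX : IsPresentableObj κ X.obj) : IsPresentableObj κ X := by
  intro J _ hJ
  have := hP J hJ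
  have := hX J hJ
  exact preservesColimitsOfShape_of_natIso (F := P.ι ⋙ coyoneda.obj (op X.obj))
    (NatIso.ofComponents fun Z => P.fullyFaithfulι.homEquiv.symm.toIso)

theorem isAccessibleCat_fullSubcategory
    (hcolim : ∀ (J : Type v) [Preorder J], IsCardDirected κ J → HasColimitsOfShape J A)
    (hP : ∀ (J : Type v) [Preorder J], IsCardDirected κ J → ∀ (D : J ⥤ A) (c : Cocone D),
      IsColimit c → (∀ j, P (D.obj j)) → P c.pt)
    {ι : Type v} {F : ι → A} (hF : ∀ i, IsPresentableObj κ (F i)) (hFP : ∀ i, P (F i))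
    (hgen : ∀ Y, P Y → IsDirColimitOf κ (Set.range F) Y) :
    IsAccessibleCat κ P.FullSubcategory := by
  have hclosed (J : Type v) [Preorder J] (hJ : IsCardDirected κ J) :
      P.IsClosedUnderColimitsOfShape J :=
    ⟨fun _ ⟨p⟩ => hP J hJ p.diag _ p.isColimit p.prop_diag_obj⟩
  have hpres (J : Type v) [Preorder J] (hJ : IsCardDirected κ J) :
      PreservesColimitsOfShape J P.ι := by
    have := hclosed J hJ
    have := hcolim J hJ
    infer_instance
  refine ⟨fun J _ hJ => ?_, ι, fun i => ⟨F i, hFP i⟩,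
    fun i => IsPresentableObj.fullSubcategory hpres (hF i), fun Y => ?_⟩
  · have := hclosed J hJ
    have := hcolim J hJ
    infer_instance
  · refine (IsDirColimitOf.fullSubcategory ?_ (hgen Y.obj Y.property)).mono ?_
    · rintro _ ⟨i, rfl⟩
      exact hFP i
    · rintro Z ⟨i, hi⟩
      exact ⟨i, ObjectProperty.FullSubcategory.ext hi⟩

end FullSubcategory

theorem stmt15 {A : Type u} [Category.{v} A] (κ : Cardinal.{v}) (hκ : κ.IsRegular)
    (hA : IsAccessibleCat κ A)
    (ι : Type v) (F : ι → A) (hF : ∀ i, IsPresentableObj κ (F i))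
    (B : Set A) (hB : ∀ Y : A, Y ∈ B ↔ IsDirColimitOf κ (Set.range F) Y) :
    (∀ Y : A, Y ∈ B ↔ ∀ X : A, IsPresentableObj κ X → ∀ f : X ⟶ Y,
      ∃ (i : ι) (g : X ⟶ F i) (h : F i ⟶ Y), g ≫ h = f) ∧
    (∀ (J : Type v) [Preorder J], IsCardDirected κ J → ∀ (D : J ⥤ A) (c : Cocone D),
      IsColimit c → (∀ j : J, D.obj j ∈ B) → c.pt ∈ B) ∧
    IsAccessibleCat κ (ObjectProperty.FullSubcategory (· ∈ B)) := by
  have hmem (Y : A) : Y ∈ B ↔ ∀ X : A, IsPresentableObj κ X → ∀ f : X ⟶ Y,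
      ∃ (i : ι) (g : X ⟶ F i) (h : F i ⟶ Y), g ≫ h = f :=
    (hB Y).trans ⟨fun hY _ hX f => hY.exists_factorization hX f,
      isDirColimitOf_of_forall_factorization hκ hA hF⟩
  have hclosed (J : Type v) [Preorder J] (hJ : IsCardDirected κ J) (D : J ⥤ A) (c : Cocone D)
      (hc : IsColimit c) (hD : ∀ j : J, D.obj j ∈ B) : c.pt ∈ B := by
    refine (hmem _).2 fun X hX f => ?_
    have := hX J hJ
    obtain ⟨j, g, rfl⟩ := exists_hom_of_preservesColimit_coyoneda hc f
    obtain ⟨i, g', h', rfl⟩ := (hmem _).1 (hD j) X hX g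
    exact ⟨i, g', h' ≫ c.ι.app j, (Category.assoc _ _ _).symm⟩
  have hFB (i : ι) : F i ∈ B := (hmem _).2 fun _ _ f => ⟨i, f, 𝟙 _, Category.comp_id f⟩
  exact ⟨hmem, hclosed, isAccessibleCat_fullSubcategory hA.1 hclosed hF hFB fun Y => (hB Y).1⟩
end
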